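/- arXiv:2508.05809 — 2 statements merged into one kernel-verified Lean document; each statement's English description precedes it below -/
import Mathlib

section
/- Let n ≥ 3 and let 2^n be the Boolean lattice of all subsets of an n-element set. Then the independence number of the strong resolving graph of G^c(2^n) equals 2^{n-1} − 1. -/
/-- Vertices: nonempty proper subsets of an `n`-element set. -/
def BVert (n : ℕ) : Type :=
  {s : Finset (Fin n) // s ≠ ∅ ∧ s ≠ Finset.univ}

/-- The complement `G^c(2^n)` of the zero-divisor graph of the Boolean lattice `2^n`. -/
def GcB (n : ℕ) : SimpleGraph (BVert n) where
  Adj s t := s ≠ t ∧ s.1 ∩ t.1 ≠ ∅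
  symm := ⟨fun s t h => ⟨h.1.symm, by rw [Finset.inter_comm]; exact h.2⟩⟩
  loopless := ⟨fun s h => h.1 rfl⟩

/-- `u` is maximally distant from `v` in `G`. -/
def MaxDistant {V : Type*} (G : SimpleGraph V) (u v : V) : Prop :=
  ∀ w : V, G.Adj u w → G.dist w v ≤ G.dist u v

/-- `u` and `v` are mutually maximally distant in `G`. -/
def MutuallyMaxDistant {V : Type*} (G : SimpleGraph V) (u v : V) : Prop :=
  MaxDistant G u v ∧ MaxDistant G v u

/-- The strong resolving graph of `G`. -/
def srGraph {V : Type*} (G : SimpleGraph V) : SimpleGraph V where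
  Adj u v := u ≠ v ∧ MutuallyMaxDistant G u v
  symm := ⟨fun u v h => ⟨h.1.symm, h.2.2, h.2.1⟩⟩
  loopless := ⟨fun u h => h.1 rfl⟩

/-- The independence number of a graph: the maximum cardinality of a set of pairwise
non-adjacent vertices. -/
noncomputable def indepNum {V : Type*} (G : SimpleGraph V) : ℕ :=
  sSup {k | ∃ S : Set V, S.Finite ∧ S.Pairwise (fun u v => ¬ G.Adj u v) ∧ Nat.card S = k}

/-!
Any two vertices of `G^c(2^n)` are at distance at most 2: disjoint `s` and `t` are joined
through `{x, y}` with `x ∈ s`, `y ∈ t`, a proper subset because `n ≥ 3`. So disjoint pairs are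
mutually maximally distant, while for intersecting `s ≠ t` and `x ∈ s \ t` the neighbour `{x}`
of `s` lies at distance 2 from `t`, which is adjacent to `s`. Hence `G_SR` is the disjointness
graph and its independent sets are the intersecting families of nonempty proper subsets.
Adjoining the full set keeps such a family intersecting, and an intersecting family holds at
most half of all subsets, so it has at most `2^(n-1) - 1` members; the sets containing a fixed
point attain this.
-/

open Finset

section

variable {V : Type*} {G : SimpleGraph V} {u v w : V}

theorem mutuallyMaxDistant_of_forall_dist_le (h : ∀ a b, G.dist a b ≤ G.dist u v) :
    MutuallyMaxDistant G u v :=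
  ⟨fun w _ => h w v, fun w _ => (h w u).trans_eq G.dist_comm⟩

theorem not_maxDistant_of_adj_of_not_adj (huv : G.Adj u v) (huw : G.Adj u w)
    (hwv : G.Reachable w v) (hne : w ≠ v) (hnadj : ¬G.Adj w v) : ¬MaxDistant G u v := by
  intro hmax
  have hle : G.dist w v ≤ 1 := SimpleGraph.dist_eq_one_iff_adj.2 huv ▸ hmax w huw
  have hpos : 0 < G.dist w v := hwv.pos_dist_of_ne hne
  have hne_one : G.dist w v ≠ 1 := fun h => hnadj (SimpleGraph.dist_eq_one_iff_adj.1 h)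
  omega

theorem indepNum_eq {S : Set V} (hS : S.Finite) (hind : G.IsIndepSet S)
    (hmax : ∀ T : Set V, T.Finite → G.IsIndepSet T → Nat.card T ≤ Nat.card S) :
    indepNum G = Nat.card S := by
  have hmem : Nat.card S ∈ {k | ∃ T : Set V, T.Finite ∧ G.IsIndepSet T ∧ Nat.card T = k} :=
    ⟨S, hS, hind, rfl⟩
  have hub : ∀ k ∈ {k | ∃ T : Set V, T.Finite ∧ G.IsIndepSet T ∧ Nat.card T = k},
      k ≤ Nat.card S := by
    rintro k ⟨T, hT, hTind, rfl⟩
    exact hmax T hT hTind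
  exact le_antisymm (csSup_le ⟨_, hmem⟩ hub) (le_csSup ⟨_, hub⟩ hmem)

end

theorem Finset.card_filter_mem_univ {α : Type*} [Fintype α] [DecidableEq α] (a : α) :
    #{s : Finset α | a ∈ s} = 2 ^ (Fintype.card α - 1) := by
  rw [← card_univ, ← card_erase_of_mem (mem_univ a), ← card_powerset]
  refine card_nbij' (fun s => s.erase a) (insert a) ?_ ?_ ?_ ?_
  · intro s _
    simp
  · intro t _
    simp
  · intro s hs
    exact insert_erase (mem_filter.1 hs).2
  · intro t ht
    exact erase_insert fun h => (mem_erase.1 (mem_powerset.1 ht h)).1 rfl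

theorem Set.Intersecting.card_add_one_le {α : Type*} [Fintype α] [DecidableEq α] [Nonempty α]
    {𝒜 : Set (Finset α)} (h𝒜 : 𝒜.Intersecting) (huniv : Finset.univ ∉ 𝒜) :
    Nat.card 𝒜 + 1 ≤ 2 ^ (Fintype.card α - 1) := by
  have hins : ((insert Finset.univ 𝒜.toFinite.toFinset : Finset (Finset α)) :
      Set (Finset α)).Intersecting := by
    rw [coe_insert, Set.Finite.coe_toFinset]
    exact h𝒜.insert Finset.univ_nonempty.ne_empty fun s hs =>
      top_disjoint.not.2 (h𝒜.ne_bot hs)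
  have hcard := hins.card_le
  rw [card_insert_of_notMem (by simpa using huniv), Fintype.card_finset] at hcard
  obtain ⟨k, hk⟩ := Nat.exists_eq_add_of_lt (Fintype.card_pos (α := α))
  rw [hk, pow_succ] at hcard
  rw [Nat.card_eq_card_finite_toFinset 𝒜.toFinite, hk, Nat.add_sub_cancel]
  omega

namespace BVert

instance (n : ℕ) : Finite (BVert n) := Subtype.finite

variable {n : ℕ}

theorem val_nonempty (s : BVert n) : s.1.Nonempty :=
  nonempty_iff_ne_empty.2 s.2.1

theorem not_disjoint_self (s : BVert n) : ¬Disjoint s.1 s.1 := fun h =>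
  (val_nonempty s).ne_empty (disjoint_self.1 h)

def singleton (hn : 2 ≤ n) (x : Fin n) : BVert n :=
  ⟨{x}, singleton_ne_empty x, (card_lt_iff_ne_univ _).1 <| by simp; omega⟩

def pair (hn : 3 ≤ n) (x y : Fin n) : BVert n :=
  ⟨{x, y}, insert_ne_empty x {y}, (card_lt_iff_ne_univ _).1 <| by
    simp only [Fintype.card_fin]; exact card_le_two.trans_lt (by omega)⟩

def star (a : Fin n) : Set (BVert n) := {s | a ∈ s.1}

theorem card_star (a : Fin n) : Nat.card (star a) = 2 ^ (n - 1) - 1 := by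
  have hcard : Nat.card (Subtype.val '' star a) = Nat.card (star a) :=
    Nat.card_image_of_injective Subtype.val_injective (star a)
  have himage : Subtype.val '' star a = ↑((univ.filter (a ∈ ·)).erase univ) := by
    ext t
    rw [mem_coe, mem_erase, mem_filter]
    constructor
    · rintro ⟨s, hs, rfl⟩
      exact ⟨s.2.2, mem_univ _, hs⟩
    · rintro ⟨hu, -, ha⟩
      exact ⟨⟨t, ne_empty_of_mem ha, hu⟩, ha, rfl⟩
  rw [← hcard, himage, Nat.card_coe_set_eq, Set.ncard_coe_finset, card_erase_of_mem (by simp),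
    card_filter_mem_univ, Fintype.card_fin]

theorem intersecting_image_star (a : Fin n) : (Subtype.val '' star a).Intersecting := by
  rintro _ ⟨s, hs, rfl⟩ _ ⟨t, ht, rfl⟩
  exact not_disjoint_iff.2 ⟨a, hs, ht⟩

theorem card_le_of_intersecting (hn : 0 < n) {S : Set (BVert n)}
    (h : (Subtype.val '' S).Intersecting) : Nat.card S ≤ 2 ^ (n - 1) - 1 := by
  have : Nonempty (Fin n) := ⟨⟨0, hn⟩⟩
  have hcard : Nat.card (Subtype.val '' S) = Nat.card S :=
    Nat.card_image_of_injective Subtype.val_injective S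
  have := h.card_add_one_le fun ⟨s, _, hs⟩ => s.2.2 hs
  rw [Fintype.card_fin] at this
  omega

end BVert

namespace GcB

open BVert

variable {n : ℕ} {s t : BVert n}

theorem adj_iff : (GcB n).Adj s t ↔ s ≠ t ∧ ¬Disjoint s.1 t.1 := by
  rw [disjoint_iff_inter_eq_empty]
  rfl

theorem adj_of_mem (hne : s ≠ t) {x : Fin n} (hs : x ∈ s.1) (ht : x ∈ t.1) :
    (GcB n).Adj s t :=
  adj_iff.2 ⟨hne, not_disjoint_iff.2 ⟨x, hs, ht⟩⟩

theorem exists_walk_length_le_two (hn : 3 ≤ n) (s t : BVert n) :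
    ∃ p : (GcB n).Walk s t, p.length ≤ 2 := by
  by_cases hst : s = t
  · subst hst
    exact ⟨.nil, by simp⟩
  by_cases hdisj : Disjoint s.1 t.1
  · obtain ⟨x, hx⟩ := val_nonempty s
    obtain ⟨y, hy⟩ := val_nonempty t
    have hxc : x ∈ (pair hn x y).1 := mem_insert_self x {y}
    have hyc : y ∈ (pair hn x y).1 := mem_insert_of_mem (mem_singleton_self y)
    have hsc : (GcB n).Adj s (pair hn x y) :=
      adj_of_mem (fun h => disjoint_right.1 hdisj hy (h ▸ hyc)) hx hxc
    have hct : (GcB n).Adj (pair hn x y) t :=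
      adj_of_mem (fun h => disjoint_left.1 hdisj hx (h ▸ hxc)) hyc hy
    exact ⟨.cons hsc (.cons hct .nil), by simp⟩
  · exact ⟨.cons (adj_iff.2 ⟨hst, hdisj⟩) .nil, by simp⟩

theorem reachable (hn : 3 ≤ n) (s t : BVert n) : (GcB n).Reachable s t :=
  let ⟨p, _⟩ := exists_walk_length_le_two hn s t
  ⟨p⟩

theorem dist_le_two (hn : 3 ≤ n) (s t : BVert n) : (GcB n).dist s t ≤ 2 :=
  let ⟨p, hp⟩ := exists_walk_length_le_two hn s t
  (SimpleGraph.dist_le p).trans hp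

theorem dist_eq_two_of_disjoint (hn : 3 ≤ n) (h : Disjoint s.1 t.1) : (GcB n).dist s t = 2 := by
  have hne : s ≠ t := fun hst => not_disjoint_self s (hst ▸ h)
  have hpos : 0 < (GcB n).dist s t := (reachable hn s t).pos_dist_of_ne hne
  have hne_one : (GcB n).dist s t ≠ 1 := fun h1 =>
    (adj_iff.1 (SimpleGraph.dist_eq_one_iff_adj.1 h1)).2 h
  have := dist_le_two hn s t
  omega

theorem not_maxDistant_of_mem_of_notMem (hn : 3 ≤ n) (hst : s ≠ t) (hdisj : ¬Disjoint s.1 t.1)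
    {x : Fin n} (hs : x ∈ s.1) (ht : x ∉ t.1) : ¬MaxDistant (GcB n) s t := by
  set w := singleton (by omega) x
  have hxw : x ∈ w.1 := mem_singleton_self x
  have hwt : Disjoint w.1 t.1 := disjoint_singleton_left.2 ht
  have hsw : s ≠ w := fun h => hdisj (h ▸ hwt)
  exact not_maxDistant_of_adj_of_not_adj (adj_iff.2 ⟨hst, hdisj⟩) (adj_of_mem hsw hs hxw)
    (reachable hn w t) (fun h => ht (h ▸ hxw)) (fun h => (adj_iff.1 h).2 hwt)

theorem srGraph_adj_iff (hn : 3 ≤ n) : (srGraph (GcB n)).Adj s t ↔ Disjoint s.1 t.1 := by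
  constructor
  · rintro ⟨hst, hst_max, hts_max⟩
    by_contra hdisj
    by_cases hsub : s.1 ⊆ t.1
    · obtain ⟨x, ht, hs⟩ := not_subset.1 fun hts => hst (Subtype.ext (hsub.antisymm hts))
      exact not_maxDistant_of_mem_of_notMem hn hst.symm (fun h => hdisj h.symm) ht hs hts_max
    · obtain ⟨x, hs, ht⟩ := not_subset.1 hsub
      exact not_maxDistant_of_mem_of_notMem hn hst hdisj hs ht hst_max
  · intro h
    refine ⟨fun hst => not_disjoint_self s (hst ▸ h), ?_⟩
    exact mutuallyMaxDistant_of_forall_dist_le fun a b =>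
      (dist_le_two hn a b).trans (dist_eq_two_of_disjoint hn h).ge

theorem isIndepSet_srGraph_iff (hn : 3 ≤ n) {S : Set (BVert n)} :
    (srGraph (GcB n)).IsIndepSet S ↔ (Subtype.val '' S).Intersecting := by
  constructor
  · rintro hS _ ⟨s, hs, rfl⟩ _ ⟨t, ht, rfl⟩
    by_cases hst : s = t
    · exact hst ▸ not_disjoint_self s
    · exact fun h => hS hs ht hst ((srGraph_adj_iff hn).2 h)
  · intro hS s hs t ht _ hadj
    exact hS ⟨s, hs, rfl⟩ ⟨t, ht, rfl⟩ ((srGraph_adj_iff hn).1 hadj)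

end GcB

/-- for `n ≥ 3`, the independence number of the strong resolving graph of
`G^c(2^n)` equals `2^(n-1) - 1`. -/
theorem indepNum_srGraph_gc_boolean (n : ℕ) (hn : 3 ≤ n) :
    indepNum (srGraph (GcB n)) = 2 ^ (n - 1) - 1 := by
  let a : Fin n := ⟨0, by omega⟩
  rw [← BVert.card_star a, indepNum_eq (Set.toFinite _)
    ((GcB.isIndepSet_srGraph_iff hn).2 (BVert.intersecting_image_star a))]
  intro T _ hT
  rw [BVert.card_star a]
  exact BVert.card_le_of_intersecting (by omega) ((GcB.isIndepSet_srGraph_iff hn).1 hT)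
end

section
/- Let F be a finite field, let n ≥ 3, and let V = F^n be the n-dimensional vector space over F with its standard basis. Let IG(V) be the nonzero component graph of V: its vertices are the nonzero vectors of V, and distinct vectors a, b are adjacent iff there is an index i with a_i ≠ 0 and b_i ≠ 0. Then sdim_M(IG(V)) = (|F|^n − 1) − 2^{n−1}. -/
/-!
`IG(V)` has diameter two: vectors with disjoint supports have the common neighbour `a + b`.
In a graph of diameter two, a vertex `w ∉ {u, v}` strongly resolves `u, v` only when
`u ~ v` and `w` lies in exactly one of the closed neighbourhoods `N[u]`, `N[v]`; and such a `w`
is then at distance two from the other endpoint. Hence `W` is a strong resolving set iff it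
meets every pair that is non-adjacent or has equal closed neighbourhoods. In `IG(V)` these are
the pairs with disjoint or equal supports, so the complements of strong resolving sets are
exactly the sets of vectors with pairwise distinct, pairwise intersecting supports. An
intersecting family of subsets of an `n`-set has at most `2^(n-1)` members, and a maximal one
has exactly that many; its `0/1`-indicator vectors realise the bound.
-/

/-- The nonzero component graph of the vector space `F^n` (with respect to the standard
basis): vertices are the nonzero vectors, and distinct vectors are adjacent iff some
coordinate is nonzero in both. -/
def NZCGraph (F : Type*) [Field F] (n : ℕ) :
    SimpleGraph {a : Fin n → F // a ≠ 0} where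
  Adj a b := a ≠ b ∧ ∃ i : Fin n, a.1 i ≠ 0 ∧ b.1 i ≠ 0
  symm := ⟨fun a b h => ⟨h.1.symm, h.2.imp fun i hi => ⟨hi.2, hi.1⟩⟩⟩
  loopless := ⟨fun a h => h.1 rfl⟩

/-- `w` strongly resolves `u` and `v` in `G`. -/
def StronglyResolves {V : Type*} (G : SimpleGraph V) (w u v : V) : Prop :=
  G.dist u w = G.dist u v + G.dist v w ∨ G.dist v w = G.dist v u + G.dist u w

/-- A strong resolving set for `G`. -/
def IsStrongResolvingSet {V : Type*} (G : SimpleGraph V) (W : Set V) : Prop :=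
  ∀ u v : V, u ≠ v → ∃ w ∈ W, StronglyResolves G w u v

/-- The strong metric dimension of `G`. -/
noncomputable def sdim {V : Type*} (G : SimpleGraph V) : ℕ :=
  sInf {k | ∃ W : Set V, W.Finite ∧ IsStrongResolvingSet G W ∧ Nat.card W = k}

open Function

section StrongResolving

variable {V : Type*} {G : SimpleGraph V}

lemma stronglyResolves_left (u v : V) : StronglyResolves G u u v :=
  Or.inr (by simp)

lemma stronglyResolves_right (u v : V) : StronglyResolves G v u v :=
  Or.inl (by simp)

lemma StronglyResolves.symm {w u v : V} (h : StronglyResolves G w u v) :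
    StronglyResolves G w v u :=
  Or.symm h

lemma isStrongResolvingSet_univ (G : SimpleGraph V) : IsStrongResolvingSet G Set.univ :=
  fun u v _ => ⟨u, trivial, stronglyResolves_left u v⟩

lemma sdim_le_ncard {W : Set V} (hW : W.Finite) (h : IsStrongResolvingSet G W) :
    sdim G ≤ W.ncard :=
  Nat.sInf_le ⟨W, hW, h, Nat.card_coe_set_eq W⟩

lemma le_sdim [Finite V] {k : ℕ} (h : ∀ W, IsStrongResolvingSet G W → k ≤ W.ncard) :
    k ≤ sdim G := by
  refine le_csInf ⟨_, Set.univ, Set.finite_univ, isStrongResolvingSet_univ G, rfl⟩ ?_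
  rintro _ ⟨W, -, hW, rfl⟩
  rw [Nat.card_coe_set_eq]
  exact h W hW

end StrongResolving

namespace SimpleGraph

variable {V : Type*} {G : SimpleGraph V}

def closedNeighborSet (G : SimpleGraph V) (v : V) : Set V :=
  insert v (G.neighborSet v)

lemma mem_closedNeighborSet {v w : V} : w ∈ G.closedNeighborSet v ↔ w = v ∨ G.Adj v w :=
  Iff.rfl

lemma preconnected_of_ediam_le_two (hG : G.ediam ≤ 2) : G.Preconnected :=
  preconnected_of_ediam_ne_top (ne_top_of_le_ne_top (by decide) hG)

lemma dist_le_two_of_ediam_le_two (hG : G.ediam ≤ 2) (u v : V) : G.dist u v ≤ 2 := by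
  have h : G.edist u v ≤ 2 := edist_le_ediam.trans hG
  rw [← (preconnected_of_ediam_le_two hG u v).coe_dist_eq_edist] at h
  exact_mod_cast h

lemma dist_eq_two_of_ediam_le_two (hG : G.ediam ≤ 2) {u v : V} (hne : u ≠ v)
    (hadj : ¬G.Adj u v) : G.dist u v = 2 :=
  le_antisymm (dist_le_two_of_ediam_le_two hG u v)
    ((preconnected_of_ediam_le_two hG u v).one_lt_dist_of_ne_of_not_adj hne hadj)

lemma eq_of_dist_eq_dist_add_dist (hG : G.ediam ≤ 2) {u v w : V} (huv : u ≠ v)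
    (hmax : ¬G.Adj u v ∨ G.closedNeighborSet u = G.closedNeighborSet v)
    (h : G.dist u w = G.dist u v + G.dist v w) : w = v := by
  refine ((preconnected_of_ediam_le_two hG v w).dist_eq_zero_iff.1 ?_).symm
  have huw := dist_le_two_of_ediam_le_two hG u w
  rcases hmax with hna | htwin
  · rw [dist_eq_two_of_ediam_le_two hG huv hna] at h
    omega
  · by_contra hvw
    have hadj : G.Adj u v := by
      have hu : u ∈ G.closedNeighborSet v := htwin ▸ Or.inl rfl
      exact (hu.resolve_left huv).symm
    rw [dist_eq_one_iff_adj.2 hadj] at h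
    have hvw : G.Adj v w := dist_eq_one_iff_adj.1 (by omega)
    have hw : w ∈ G.closedNeighborSet u := htwin ▸ Or.inr hvw
    rcases hw with rfl | huw'
    · simp only [dist_self] at h
      omega
    · rw [dist_eq_one_iff_adj.2 huw'] at h
      omega

lemma mem_and_stronglyResolves_of_ediam_le_two (hG : G.ediam ≤ 2) {W : Set V}
    (hW : ∀ u v, u ≠ v →
      (¬G.Adj u v ∨ G.closedNeighborSet u = G.closedNeighborSet v) → u ∈ W ∨ v ∈ W)
    {u v w : V} (hu : u ∉ W) (huv : G.Adj u v) (hwv : w ∈ G.closedNeighborSet v)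
    (hwu : w ∉ G.closedNeighborSet u) : w ∈ W ∧ StronglyResolves G w u v := by
  obtain ⟨hwu, hnadj⟩ := not_or.1 hwu
  have hvw : G.Adj v w := hwv.resolve_left (by rintro rfl; exact hnadj huv)
  refine ⟨(hW u w (Ne.symm hwu) (.inl hnadj)).resolve_left hu, Or.inl ?_⟩
  rw [dist_eq_two_of_ediam_le_two hG (Ne.symm hwu) hnadj, dist_eq_one_iff_adj.2 huv,
    dist_eq_one_iff_adj.2 hvw]

theorem isStrongResolvingSet_iff_of_ediam_le_two (hG : G.ediam ≤ 2) {W : Set V} :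
    IsStrongResolvingSet G W ↔ ∀ u v, u ≠ v →
      (¬G.Adj u v ∨ G.closedNeighborSet u = G.closedNeighborSet v) → u ∈ W ∨ v ∈ W := by
  refine ⟨fun hW u v huv hmax => ?_, fun hW u v huv => ?_⟩
  · obtain ⟨w, hw, h | h⟩ := hW u v huv
    · exact .inr (eq_of_dist_eq_dist_add_dist hG huv hmax h ▸ hw)
    · exact .inl (eq_of_dist_eq_dist_add_dist hG huv.symm
        (hmax.imp (mt Adj.symm) Eq.symm) h ▸ hw)
  by_cases hu : u ∈ W
  · exact ⟨u, hu, stronglyResolves_left u v⟩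
  by_cases hv : v ∈ W
  · exact ⟨v, hv, stronglyResolves_right u v⟩
  have hadj : G.Adj u v := by_contra fun hna => (hW u v huv (.inl hna)).elim hu hv
  have htwin : G.closedNeighborSet u ≠ G.closedNeighborSet v :=
    fun h => (hW u v huv (.inr h)).elim hu hv
  obtain ⟨w, hw⟩ := not_forall.1 (mt Set.ext htwin)
  by_cases hwv : w ∈ G.closedNeighborSet v
  · obtain ⟨hwW, hres⟩ := mem_and_stronglyResolves_of_ediam_le_two hG hW hu hadj hwv
      fun hwu => hw (iff_of_true hwu hwv)
    exact ⟨w, hwW, hres⟩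
  · obtain ⟨hwW, hres⟩ := mem_and_stronglyResolves_of_ediam_le_two hG hW hv hadj.symm
      (by_contra fun hwu => hw (iff_of_false hwu hwv)) hwv
    exact ⟨w, hwW, hres.symm⟩

end SimpleGraph

namespace NZCGraph

variable {F : Type*} [Field F] {n : ℕ}

lemma support_nonempty (a : {a : Fin n → F // a ≠ 0}) : (support a.1).Nonempty :=
  support_nonempty_iff.2 a.2

lemma adj_iff {a b : {a : Fin n → F // a ≠ 0}} :
    (NZCGraph F n).Adj a b ↔ a ≠ b ∧ ¬Disjoint (support a.1) (support b.1) := by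
  simp [NZCGraph, Set.not_disjoint_iff]

lemma adj_of_support_ssubset {a b : {a : Fin n → F // a ≠ 0}}
    (h : support a.1 ⊂ support b.1) : (NZCGraph F n).Adj a b := by
  refine adj_iff.2 ⟨fun hab => h.ne (by rw [hab]), ?_⟩
  rw [Set.not_disjoint_iff_nonempty_inter, Set.inter_eq_left.2 h.subset]
  exact support_nonempty a

lemma exists_adj_adj_of_disjoint {a b : {a : Fin n → F // a ≠ 0}}
    (h : Disjoint (support a.1) (support b.1)) :
    ∃ c, (NZCGraph F n).Adj a c ∧ (NZCGraph F n).Adj c b := by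
  have hsupp : support (a.1 + b.1) = support a.1 ∪ support b.1 := by
    ext i
    by_cases hb : b.1 i = 0
    · simp [hb]
    · have ha : a.1 i = 0 := notMem_support.1 (h.notMem_of_mem_right (mem_support.2 hb))
      simp [ha, hb]
  have hc : a.1 + b.1 ≠ 0 :=
    support_nonempty_iff.1 (hsupp ▸ (support_nonempty a).mono Set.subset_union_left)
  refine ⟨⟨a.1 + b.1, hc⟩, adj_of_support_ssubset ?_, (adj_of_support_ssubset ?_).symm⟩
  · rw [hsupp, Set.ssubset_union_left_iff]
    exact fun hba => (support_nonempty b).ne_empty (h.symm.eq_bot_of_le hba)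
  · rw [hsupp, Set.ssubset_union_right_iff]
    exact fun hab => (support_nonempty a).ne_empty (h.eq_bot_of_le hab)

lemma ediam_le_two : (NZCGraph F n).ediam ≤ 2 := by
  refine SimpleGraph.ediam_le_of_edist_le fun a b => ?_
  by_cases hab : (NZCGraph F n).Adj a b ∨ a = b
  · exact (SimpleGraph.edist_le_one_iff_adj_or_eq.2 hab).trans (by decide)
  obtain ⟨hnadj, hne⟩ := not_or.1 hab
  obtain ⟨c, hac, hcb⟩ := exists_adj_adj_of_disjoint (by simpa [adj_iff, hne] using hnadj)
  exact (SimpleGraph.edist_eq_two_iff.2 ⟨hne, hnadj, c, hac, hcb.symm⟩).le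

lemma mem_closedNeighborSet_iff {a b : {a : Fin n → F // a ≠ 0}} :
    b ∈ (NZCGraph F n).closedNeighborSet a ↔ ¬Disjoint (support a.1) (support b.1) := by
  rw [SimpleGraph.mem_closedNeighborSet, adj_iff]
  by_cases hab : b = a
  · subst hab
    simp [(support_nonempty b).ne_empty]
  · simp [hab, Ne.symm hab]

lemma closedNeighborSet_subset_iff {a b : {a : Fin n → F // a ≠ 0}} :
    (NZCGraph F n).closedNeighborSet a ⊆ (NZCGraph F n).closedNeighborSet b ↔
      support a.1 ⊆ support b.1 := by
  refine ⟨fun h i hi => ?_, fun h c hc => ?_⟩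
  · let c : {a : Fin n → F // a ≠ 0} := ⟨Pi.single i 1, by simp⟩
    have hc : support c.1 = {i} := Pi.support_single_of_ne one_ne_zero
    have hca : c ∈ (NZCGraph F n).closedNeighborSet a :=
      mem_closedNeighborSet_iff.2 (by rwa [hc, Set.disjoint_singleton_right, not_not])
    simpa [mem_closedNeighborSet_iff, hc, Set.disjoint_singleton_right] using h hca
  · rw [mem_closedNeighborSet_iff] at hc ⊢
    exact fun hd => hc (hd.mono_left h)

lemma closedNeighborSet_eq_iff {a b : {a : Fin n → F // a ≠ 0}} :
    (NZCGraph F n).closedNeighborSet a = (NZCGraph F n).closedNeighborSet b ↔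
      support a.1 = support b.1 := by
  simp only [Set.Subset.antisymm_iff, closedNeighborSet_subset_iff]

theorem isStrongResolvingSet_iff {W : Set {a : Fin n → F // a ≠ 0}} :
    IsStrongResolvingSet (NZCGraph F n) W ↔
      Wᶜ.InjOn (support ∘ Subtype.val) ∧ ((support ∘ Subtype.val) '' Wᶜ).Intersecting := by
  rw [SimpleGraph.isStrongResolvingSet_iff_of_ediam_le_two ediam_le_two]
  simp only [adj_iff, closedNeighborSet_eq_iff]
  refine ⟨fun hW => ⟨fun a ha b hb hab => ?_, ?_⟩, fun ⟨hinj, hint⟩ u v huv hmax => ?_⟩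
  · by_contra hne
    exact (hW a b hne (.inr hab)).elim ha hb
  · rintro _ ⟨a, ha, rfl⟩ _ ⟨b, hb, rfl⟩ hdisj
    by_cases hab : a = b
    · subst hab
      exact (support_nonempty a).ne_empty (disjoint_self.1 hdisj)
    · exact (hW a b hab (.inl fun h => h.2 hdisj)).elim ha hb
  · by_contra! h
    rcases hmax with hdisj | hsupp
    · exact hdisj ⟨huv, hint ⟨u, h.1, rfl⟩ ⟨v, h.2, rfl⟩⟩
    · exact huv (hinj h.1 h.2 hsupp)

lemma two_mul_ncard_le {T : Set {a : Fin n → F // a ≠ 0}}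
    (hinj : T.InjOn (support ∘ Subtype.val)) (hT : ((support ∘ Subtype.val) '' T).Intersecting) :
    2 * T.ncard ≤ 2 ^ n := by
  classical
  have hfin := Set.toFinite ((support ∘ Subtype.val) '' T)
  rw [← hinj.ncard_image, Set.ncard_eq_toFinset_card _ hfin]
  have hT' : (hfin.toFinset : Set (Set (Fin n))).Intersecting := hfin.coe_toFinset.symm ▸ hT
  simpa [Fintype.card_set] using hT'.card_le

lemma exists_injOn_intersecting_two_mul_ncard_eq (hn : 0 < n) :
    ∃ T : Set {a : Fin n → F // a ≠ 0}, T.InjOn (support ∘ Subtype.val) ∧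
      ((support ∘ Subtype.val) '' T).Intersecting ∧ 2 * T.ncard = 2 ^ n := by
  classical
  have : Nonempty (Fin n) := ⟨⟨0, hn⟩⟩
  obtain ⟨t, -, ht, hint⟩ :=
    (Finset.coe_empty ▸ Set.intersecting_empty :
      ((∅ : Finset (Set (Fin n))) : Set (Set (Fin n))).Intersecting).exists_card_eq
  let T : Set {a : Fin n → F // a ≠ 0} :=
    {a | support a.1 ∈ t ∧ a.1 = (support a.1).indicator 1}
  have hinj : T.InjOn (support ∘ Subtype.val) := fun a ha b hb hab =>
    Subtype.ext (ha.2.trans ((congrArg (Set.indicator · 1) hab).trans hb.2.symm))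
  have himage : (support ∘ Subtype.val) '' T = t := by
    refine subset_antisymm (Set.image_subset_iff.2 fun a ha => ha.1) fun s hs => ?_
    have hsupp : support (s.indicator (1 : Fin n → F)) = s := by simp
    have hne : s.indicator (1 : Fin n → F) ≠ 0 := by
      rw [← support_nonempty_iff, hsupp, Set.nonempty_iff_ne_empty]
      exact hint.ne_bot hs
    refine ⟨⟨_, hne⟩, ⟨?_, ?_⟩, hsupp⟩
    · simpa only [hsupp, Finset.mem_coe] using hs
    · rw [hsupp]
  refine ⟨T, hinj, himage ▸ hint, ?_⟩
  rw [← hinj.ncard_image, himage, Set.ncard_coe_finset, ht, Fintype.card_set, Fintype.card_fin]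

lemma card_vertex [Fintype F] : Nat.card {a : Fin n → F // a ≠ 0} = Fintype.card F ^ n - 1 := by
  classical
  rw [Nat.card_eq_fintype_card, Fintype.card_subtype_compl, Fintype.card_subtype_eq,
    Fintype.card_fun, Fintype.card_fin]

end NZCGraph

/-- for a finite field `F` and `n ≥ 3`, the strong metric dimension of the
nonzero component graph of `F^n` equals `(|F|^n - 1) - 2^(n-1)`. -/
theorem sdim_nonzero_component_graph (F : Type*) [Field F] [Fintype F]
    (n : ℕ) (hn : 3 ≤ n) :
    sdim (NZCGraph F n) = (Fintype.card F ^ n - 1) - 2 ^ (n - 1) := by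
  have hcard (W : Set {a : Fin n → F // a ≠ 0}) :
      W.ncard + Wᶜ.ncard = Fintype.card F ^ n - 1 :=
    (Set.ncard_add_ncard_compl W).trans NZCGraph.card_vertex
  have hpow : 2 ^ n = 2 * 2 ^ (n - 1) := by
    rw [← pow_succ']
    congr 1
    omega
  apply le_antisymm
  · obtain ⟨T, hinj, hint, hT⟩ := NZCGraph.exists_injOn_intersecting_two_mul_ncard_eq (F := F)
      (by omega : 0 < n)
    have hTc : IsStrongResolvingSet (NZCGraph F n) Tᶜ :=
      NZCGraph.isStrongResolvingSet_iff.2 (by rw [compl_compl]; exact ⟨hinj, hint⟩)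
    have hle := sdim_le_ncard (Set.toFinite Tᶜ) hTc
    have hsum := hcard T
    omega
  · refine le_sdim fun W hW => ?_
    obtain ⟨hinj, hint⟩ := NZCGraph.isStrongResolvingSet_iff.1 hW
    have hle := NZCGraph.two_mul_ncard_le hinj hint
    have hsum := hcard W
    omega
end
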